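/- For d ≥ 2 and G_d = √(4π)·Γ((d+1)/2)/Γ(d/2), the identity ∫₀^∞ (1 - (1+t)^{-d/2}) t^{-3/2} dt = G_d holds. -/

import Mathlib

/-!
With `a = d / 2`, integrating by parts against the primitive `-2 t^{-1/2}` of `t^{-3/2}` (the
boundary term at `0` vanishes because `0 ≤ 1 - (1 + t)^{-a} ≤ a t`) turns the integral into
`2 a ∫₀^∞ t^{-1/2} (1 + t)^{-a-1} dt`. The substitution `u = t / (1 + t)` makes this the Beta
integral `B(1/2, a + 1/2) = √π Γ(a + 1/2) / Γ(a + 1)`, and `Γ(a + 1) = a Γ(a)`.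
-/

open Real MeasureTheory Set Filter Topology

lemma integral_rpow_mul_one_sub_rpow_eq_beta {u v : ℝ} (hu : 0 < u) (hv : 0 < v) :
    ∫ x in (0 : ℝ)..1, x ^ (u - 1) * (1 - x) ^ (v - 1) = ProbabilityTheory.beta u v := by
  have h : Complex.betaIntegral u v
      = ↑(∫ x in (0 : ℝ)..1, x ^ (u - 1) * (1 - x) ^ (v - 1)) := by
    rw [Complex.betaIntegral, ← intervalIntegral.integral_ofReal]
    refine intervalIntegral.integral_congr fun x hx => ?_
    rw [uIcc_of_le zero_le_one] at hx
    push_cast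
    rw [Complex.ofReal_cpow hx.1, Complex.ofReal_cpow (sub_nonneg.2 hx.2)]
    push_cast
    rfl
  rw [ProbabilityTheory.beta_eq_betaIntegralReal u v hu hv, h, Complex.ofReal_re]

lemma image_div_one_sub_Ioo : (fun u : ℝ => u / (1 - u)) '' Ioo 0 1 = Ioi 0 := by
  ext t
  constructor
  · rintro ⟨u, ⟨hu0, hu1⟩, rfl⟩
    exact div_pos hu0 (sub_pos.2 hu1)
  · intro (ht : 0 < t)
    refine ⟨t / (1 + t), ⟨by positivity, (div_lt_one (by positivity)).2 (by linarith)⟩, ?_⟩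
    field_simp
    ring

lemma integral_Ioi_rpow_mul_one_add_rpow_neg_eq_integral_Ioo (s r : ℝ) :
    ∫ t in Ioi (0 : ℝ), t ^ (s - 1) * (1 + t) ^ (-(s + r))
      = ∫ u in Ioo (0 : ℝ) 1, u ^ (s - 1) * (1 - u) ^ (r - 1) := by
  have hderiv : ∀ u ∈ Ioo (0 : ℝ) 1,
      HasDerivWithinAt (fun u : ℝ => u / (1 - u)) ((1 - u) ^ (-2 : ℝ)) (Ioo 0 1) u := by
    intro u hu
    have h1u : 1 - u ≠ 0 := (sub_pos.2 hu.2).ne'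
    have h := (hasDerivAt_id u).div ((hasDerivAt_const u 1).sub (hasDerivAt_id u)) h1u
    refine h.hasDerivWithinAt.congr_deriv ?_
    rw [rpow_neg (sub_pos.2 hu.2).le, rpow_two]
    simp only [Pi.sub_apply, id]
    field_simp
    ring
  have hinj : InjOn (fun u : ℝ => u / (1 - u)) (Ioo 0 1) := by
    intro x hx y hy hxy
    have hx1 := (sub_pos.2 hx.2).ne'
    have hy1 := (sub_pos.2 hy.2).ne'
    field_simp at hxy
    linarith
  rw [← image_div_one_sub_Ioo, integral_image_eq_integral_abs_deriv_smul measurableSet_Ioo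
    hderiv hinj]
  refine setIntegral_congr_fun measurableSet_Ioo fun u ⟨hu0, hu1⟩ => ?_
  have hv : 0 < 1 - u := sub_pos.2 hu1
  have hsum : 1 + u / (1 - u) = (1 - u)⁻¹ := by field_simp; ring
  simp only [smul_eq_mul]
  rw [abs_of_pos (rpow_pos_of_pos hv _), hsum, div_rpow hu0.le hv.le, inv_rpow hv.le,
    ← rpow_neg hv.le, neg_neg, div_eq_mul_inv, ← rpow_neg hv.le]
  rw [show (1 - u) ^ (-2 : ℝ) * (u ^ (s - 1) * (1 - u) ^ (-(s - 1)) * (1 - u) ^ (s + r))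
      = u ^ (s - 1) * ((1 - u) ^ (-2 : ℝ) * (1 - u) ^ (-(s - 1)) * (1 - u) ^ (s + r)) by ring,
    ← rpow_add hv, ← rpow_add hv]
  congr 2
  ring

lemma integral_Ioi_rpow_mul_one_add_rpow_neg_eq_beta {s r : ℝ} (hs : 0 < s) (hr : 0 < r) :
    ∫ t in Ioi (0 : ℝ), t ^ (s - 1) * (1 + t) ^ (-(s + r)) = ProbabilityTheory.beta s r := by
  rw [integral_Ioi_rpow_mul_one_add_rpow_neg_eq_integral_Ioo, ← integral_Ioc_eq_integral_Ioo,
    ← intervalIntegral.integral_of_le zero_le_one, integral_rpow_mul_one_sub_rpow_eq_beta hs hr]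

lemma one_sub_one_add_rpow_neg_le {a t : ℝ} (ha : 0 ≤ a) (ht : -1 < t) :
    1 - (1 + t) ^ (-a) ≤ a * t := by
  have h1t : 0 < 1 + t := by linarith
  have hexp := add_one_le_exp (-(a * log (1 + t)))
  have hlog : log (1 + t) ≤ t := by linarith [log_le_sub_one_of_pos h1t]
  rw [rpow_def_of_pos h1t, mul_neg, mul_comm]
  nlinarith [mul_le_mul_of_nonneg_left hlog ha]

lemma one_sub_one_add_rpow_neg_nonneg {a t : ℝ} (ha : 0 ≤ a) (ht : 0 ≤ t) :
    0 ≤ 1 - (1 + t) ^ (-a) :=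
  sub_nonneg.2 (rpow_le_one_of_one_le_of_nonpos (by linarith) (neg_nonpos.2 ha))

lemma integrableOn_Ioi_of_le_rpow {f : ℝ → ℝ}
    (hf : AEStronglyMeasurable f (volume.restrict (Ioi 0))) {c₁ c₂ p q : ℝ}
    (hp : -1 < p) (hq : q < -1) (h₀ : ∀ t ∈ Ioc (0 : ℝ) 1, ‖f t‖ ≤ c₁ * t ^ p)
    (h₁ : ∀ t ∈ Ioi (1 : ℝ), ‖f t‖ ≤ c₂ * t ^ q) :
    IntegrableOn f (Ioi 0) := by
  rw [← Ioc_union_Ioi_eq_Ioi zero_le_one]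
  refine IntegrableOn.union ?_ ?_
  · have hint : IntegrableOn (fun t : ℝ => t ^ p) (Ioc 0 1) :=
      (intervalIntegrable_iff_integrableOn_Ioc_of_le zero_le_one).1
        (intervalIntegral.intervalIntegrable_rpow' hp)
    exact (hint.const_mul c₁).mono' (hf.mono_set Ioc_subset_Ioi_self)
      ((ae_restrict_iff' measurableSet_Ioc).2 (ae_of_all _ h₀))
  · exact ((integrableOn_Ioi_rpow_of_lt hq one_pos).const_mul c₂).mono'
      (hf.mono_set (Ioi_subset_Ioi zero_le_one))
      ((ae_restrict_iff' measurableSet_Ioi).2 (ae_of_all _ h₁))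

section

variable {a : ℝ}

lemma integrableOn_one_sub_one_add_rpow_neg_mul_rpow (ha : 0 ≤ a) :
    IntegrableOn (fun t : ℝ => (1 - (1 + t) ^ (-a)) * t ^ (-(3 / 2) : ℝ)) (Ioi 0) := by
  refine integrableOn_Ioi_of_le_rpow (by fun_prop : Measurable _).aestronglyMeasurable
    (c₁ := a) (c₂ := 1) (p := -(1 / 2)) (q := -(3 / 2)) (by norm_num) (by norm_num)
    (fun t ⟨ht, _⟩ => ?_) (fun t (ht : 1 < t) => ?_)
  · rw [norm_of_nonneg (mul_nonneg (one_sub_one_add_rpow_neg_nonneg ha ht.le) (by positivity))]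
    calc (1 - (1 + t) ^ (-a)) * t ^ (-(3 / 2) : ℝ) ≤ a * t * t ^ (-(3 / 2) : ℝ) := by
          gcongr
          exact one_sub_one_add_rpow_neg_le ha (by linarith)
      _ = a * t ^ (-(1 / 2) : ℝ) := by
          rw [mul_assoc, ← rpow_one_add' ht.le (by norm_num)]
          norm_num
  · have ht0 : 0 < t := by linarith
    rw [norm_of_nonneg (mul_nonneg (one_sub_one_add_rpow_neg_nonneg ha ht0.le) (by positivity))]
    gcongr
    linarith [rpow_nonneg (by linarith : (0 : ℝ) ≤ 1 + t) (-a)]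

lemma integrableOn_rpow_mul_one_add_rpow_neg (ha : 0 ≤ a) :
    IntegrableOn (fun t : ℝ => t ^ (-(1 / 2) : ℝ) * (1 + t) ^ (-(a + 1))) (Ioi 0) := by
  refine integrableOn_Ioi_of_le_rpow (by fun_prop : Measurable _).aestronglyMeasurable
    (c₁ := 1) (c₂ := 1) (p := -(1 / 2)) (q := -(3 / 2)) (by norm_num) (by norm_num)
    (fun t ⟨ht, _⟩ => ?_) (fun t (ht : 1 < t) => ?_)
  · rw [norm_of_nonneg (by positivity), one_mul]
    exact mul_le_of_le_one_right (by positivity)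
      (rpow_le_one_of_one_le_of_nonpos (by linarith) (by linarith))
  · have ht0 : 0 < t := by linarith
    rw [norm_of_nonneg (by positivity), one_mul,
      show (-(3 / 2) : ℝ) = -(1 / 2) + -1 by norm_num, rpow_add ht0]
    gcongr
    calc (1 + t) ^ (-(a + 1)) ≤ t ^ (-(a + 1)) :=
          rpow_le_rpow_of_nonpos ht0 (by linarith) (by linarith)
      _ ≤ t ^ (-1 : ℝ) := rpow_le_rpow_of_exponent_le ht.le (by linarith)

lemma hasDerivAt_rpow_mul_one_add_rpow_neg_sub_one {t : ℝ} (ht : 0 < t) :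
    HasDerivAt (fun t : ℝ => 2 * t ^ (-(1 / 2) : ℝ) * ((1 + t) ^ (-a) - 1))
      ((1 - (1 + t) ^ (-a)) * t ^ (-(3 / 2) : ℝ)
        - 2 * a * (t ^ (-(1 / 2) : ℝ) * (1 + t) ^ (-(a + 1)))) t := by
  have h₁ := (hasDerivAt_rpow_const (p := -(1 / 2)) (Or.inl ht.ne')).const_mul 2
  have h₂ := ((hasDerivAt_id t).const_add 1).rpow_const (p := -a) (Or.inl (by positivity))
  refine (h₁.mul (h₂.sub_const 1)).congr_deriv ?_
  rw [show (-(1 / 2) - 1 : ℝ) = -(3 / 2) by norm_num, show (-a - 1) = -(a + 1) by ring]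
  simp only [id]
  ring

lemma norm_rpow_mul_one_add_rpow_neg_sub_one_le (ha : 0 ≤ a) {t : ℝ} (ht : 0 < t) :
    ‖2 * t ^ (-(1 / 2) : ℝ) * ((1 + t) ^ (-a) - 1)‖
      ≤ min (2 * a * t ^ (1 / 2 : ℝ)) (2 * t ^ (-(1 / 2) : ℝ)) := by
  have h₀ := one_sub_one_add_rpow_neg_nonneg ha ht.le
  have hpos : 0 < t ^ (-(1 / 2) : ℝ) := by positivity
  rw [norm_eq_abs, abs_of_nonpos (mul_nonpos_of_nonneg_of_nonpos (by positivity) (by linarith))]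
  refine le_min ?_ ?_
  · calc -(2 * t ^ (-(1 / 2) : ℝ) * ((1 + t) ^ (-a) - 1))
          = 2 * t ^ (-(1 / 2) : ℝ) * (1 - (1 + t) ^ (-a)) := by ring
      _ ≤ 2 * t ^ (-(1 / 2) : ℝ) * (a * t) := by
          gcongr
          exact one_sub_one_add_rpow_neg_le ha (by linarith)
      _ = 2 * a * (t ^ (-(1 / 2) : ℝ) * t) := by ring
      _ = 2 * a * t ^ (1 / 2 : ℝ) := by
          rw [← rpow_add_one ht.ne']
          norm_num
  · nlinarith [rpow_nonneg (by linarith : (0 : ℝ) ≤ 1 + t) (-a)]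

lemma integral_one_sub_one_add_rpow_neg_mul_rpow (ha : 0 ≤ a) :
    ∫ t in Ioi (0 : ℝ), (1 - (1 + t) ^ (-a)) * t ^ (-(3 / 2) : ℝ)
      = 2 * a * ∫ t in Ioi (0 : ℝ), t ^ (-(1 / 2) : ℝ) * (1 + t) ^ (-(a + 1)) := by
  set g : ℝ → ℝ := fun t => 2 * t ^ (-(1 / 2) : ℝ) * ((1 + t) ^ (-a) - 1)
  have hg₀ : g 0 = 0 := by simp [g]
  have hcont : ContinuousWithinAt g (Ici 0) 0 := by
    refine continuousWithinAt_Ioi_iff_Ici.1 ?_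
    rw [ContinuousWithinAt, hg₀]
    refine squeeze_zero_norm' (eventually_nhdsWithin_of_forall fun t (ht : 0 < t) =>
      (norm_rpow_mul_one_add_rpow_neg_sub_one_le ha ht).trans (min_le_left _ _)) ?_
    have h := ((continuous_rpow_const (by norm_num : (0 : ℝ) ≤ 1 / 2)).tendsto 0).const_mul
      (2 * a)
    rw [zero_rpow (by norm_num), mul_zero] at h
    exact h.mono_left nhdsWithin_le_nhds
  have htop : Tendsto g atTop (𝓝 0) := by
    refine squeeze_zero_norm' (eventually_gt_atTop 0 |>.mono fun t ht =>
      (norm_rpow_mul_one_add_rpow_neg_sub_one_le ha ht).trans (min_le_right _ _)) ?_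
    simpa using (tendsto_rpow_neg_atTop (by norm_num : (0 : ℝ) < 1 / 2)).const_mul 2
  have hFTC := integral_Ioi_of_hasDerivAt_of_tendsto hcont
    (fun t ht => hasDerivAt_rpow_mul_one_add_rpow_neg_sub_one ht)
    ((integrableOn_one_sub_one_add_rpow_neg_mul_rpow ha).sub
      ((integrableOn_rpow_mul_one_add_rpow_neg ha).const_mul (2 * a))) htop
  rw [integral_sub (integrableOn_one_sub_one_add_rpow_neg_mul_rpow ha)
    ((integrableOn_rpow_mul_one_add_rpow_neg ha).const_mul (2 * a)), integral_const_mul, hg₀,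
    sub_zero, sub_eq_zero] at hFTC
  exact hFTC

end

theorem stmt_9 (d : ℝ) (hd : 2 ≤ d) :
    ∫ t in Set.Ioi (0 : ℝ), (1 - (1 + t) ^ (-(d / 2))) * t ^ (-(3 / 2) : ℝ)
      = Real.sqrt (4 * π) * Real.Gamma ((d + 1) / 2) / Real.Gamma (d / 2) := by
  have ha : 0 < d / 2 := by linarith
  have hbeta : ∫ t in Ioi (0 : ℝ), t ^ (-(1 / 2) : ℝ) * (1 + t) ^ (-(d / 2 + 1))
      = ProbabilityTheory.beta (1 / 2) ((d + 1) / 2) := by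
    rw [← integral_Ioi_rpow_mul_one_add_rpow_neg_eq_beta (by norm_num) (by linarith)]
    congr 1 with t
    ring_nf
  have hsqrt : √(4 * π) = 2 * √π := by
    rw [sqrt_mul zero_le_four, show (4 : ℝ) = 2 ^ 2 by norm_num, sqrt_sq zero_le_two]
  rw [integral_one_sub_one_add_rpow_neg_mul_rpow ha.le, hbeta, ProbabilityTheory.beta,
    Gamma_one_half_eq, show 1 / 2 + (d + 1) / 2 = d / 2 + 1 by ring, Gamma_add_one ha.ne', hsqrt]
  have hΓ := (Gamma_pos_of_pos ha).ne'
  field_simp
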